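/- For any family 𝒢 of connected non-trivial graphs on a common vertex set V and any family ℋ of non-trivial graphs on a common vertex set V', the simultaneous adjacency dimension of the corona family satisfies |V| · Sd_A(ℋ) ≤ Sd_A(𝒢⊙ℋ) ≤ |V| · Sd_A(ℋ) + |V| − 1. -/

import Mathlib

open SimpleGraph

/-- `S` is a metric generator for `G`: every pair of distinct vertices is
distinguished by some element of `S` via the shortest-path distance. -/
def IsMetricGen {V : Type*} (G : SimpleGraph V) (S : Set V) : Prop :=
  ∀ u v : V, u ≠ v → ∃ s ∈ S, G.dist s u ≠ G.dist s v

/-- `S` is an adjacency generator for `G`. -/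
def IsAdjGen {V : Type*} (G : SimpleGraph V) (S : Set V) : Prop :=
  ∀ x y : V, x ∉ S → y ∉ S → x ≠ y → ∃ s ∈ S, Xor' (G.Adj s x) (G.Adj s y)

/-- `S` is a simultaneous metric generator for the family `𝒢`. -/
def IsSimMetricGen {V : Type*} (𝒢 : Set (SimpleGraph V)) (S : Set V) : Prop :=
  ∀ G ∈ 𝒢, IsMetricGen G S

/-- `S` is a simultaneous adjacency generator for the family `ℋ`. -/
def IsSimAdjGen {V : Type*} (ℋ : Set (SimpleGraph V)) (S : Set V) : Prop :=
  ∀ H ∈ ℋ, IsAdjGen H S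

/-- The simultaneous metric dimension of a family of graphs. -/
noncomputable def Sd {V : Type*} (𝒢 : Set (SimpleGraph V)) : ℕ :=
  sInf {n | ∃ S : Set V, S.ncard = n ∧ IsSimMetricGen 𝒢 S}

/-- The simultaneous adjacency dimension of a family of graphs. -/
noncomputable def SdA {V : Type*} (ℋ : Set (SimpleGraph V)) : ℕ :=
  sInf {n | ∃ S : Set V, S.ncard = n ∧ IsSimAdjGen ℋ S}

/-- The adjacency dimension of a graph. -/
noncomputable def adjDim {V : Type*} (G : SimpleGraph V) : ℕ := SdA {G}

/-- `B` is an adjacency basis of `G`. -/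
def IsAdjBasis {V : Type*} (G : SimpleGraph V) (B : Set V) : Prop :=
  IsAdjGen G B ∧ B.ncard = adjDim G

/-- `B` is a simultaneous adjacency basis of the family `ℋ`. -/
def IsSimAdjBasis {V : Type*} (ℋ : Set (SimpleGraph V)) (B : Set V) : Prop :=
  IsSimAdjGen ℋ B ∧ B.ncard = SdA ℋ

/-- `D` is a dominating set of `G`. -/
def IsDomSet {V : Type*} (G : SimpleGraph V) (D : Set V) : Prop :=
  ∀ v ∉ D, ∃ u ∈ D, G.Adj u v

/-- `D` is a simultaneous dominating set of the family `𝒢`. -/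
def IsSimDomSet {V : Type*} (𝒢 : Set (SimpleGraph V)) (D : Set V) : Prop :=
  ∀ G ∈ 𝒢, IsDomSet G D

/-- The simultaneous domination number of a family of graphs. -/
noncomputable def Sgamma {V : Type*} (𝒢 : Set (SimpleGraph V)) : ℕ :=
  sInf {n | ∃ D : Set V, D.ncard = n ∧ IsSimDomSet 𝒢 D}

/-- The domination number of a graph. -/
noncomputable def domNum {V : Type*} (G : SimpleGraph V) : ℕ := Sgamma {G}

/-- `γ'(G) = min over vertices `v` of `γ(G - v)`. -/
noncomputable def gammaPrime {V : Type*} (G : SimpleGraph V) : ℕ :=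
  sInf {n | ∃ v : V, n = domNum (G.induce {v}ᶜ)}

/-- The corona product `G ⊙ H`: one copy of `G` together with a copy of `H`
for each vertex `i` of `G`, joining `i` to every vertex of its copy. -/
def corona {V V' : Type*} (G : SimpleGraph V) (H : SimpleGraph V') :
    SimpleGraph (V ⊕ V × V') where
  Adj x y :=
    match x, y with
    | Sum.inl i, Sum.inl j => G.Adj i j
    | Sum.inl i, Sum.inr p => i = p.1
    | Sum.inr p, Sum.inl j => p.1 = j
    | Sum.inr p, Sum.inr q => p.1 = q.1 ∧ H.Adj p.2 q.2
  symm := by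
    constructor
    rintro (i | p) (j | q) h
    · exact G.adj_symm h
    · exact h.symm
    · exact h.symm
    · exact ⟨h.1.symm, H.adj_symm h.2⟩
  loopless := by
    constructor
    rintro (i | p) h
    · exact G.irrefl h
    · exact H.irrefl h.2

/-- The family `{G ⊙ H : G ∈ 𝒢, H ∈ ℋ}` of corona products. -/
def coronaFam {V V' : Type*} (𝒢 : Set (SimpleGraph V)) (ℋ : Set (SimpleGraph V')) :
    Set (SimpleGraph (V ⊕ V × V')) :=
  {K | ∃ G ∈ 𝒢, ∃ H ∈ ℋ, K = corona G H}

/-- The join `G + H` of two (vertex-disjoint) graphs. -/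
def joinG {V₁ V₂ : Type*} (G : SimpleGraph V₁) (H : SimpleGraph V₂) :
    SimpleGraph (V₁ ⊕ V₂) where
  Adj x y :=
    match x, y with
    | Sum.inl a, Sum.inl b => G.Adj a b
    | Sum.inl _, Sum.inr _ => True
    | Sum.inr _, Sum.inl _ => True
    | Sum.inr a, Sum.inr b => H.Adj a b
  symm := by
    constructor
    rintro (a | a) (b | b) h
    · exact G.adj_symm h
    · trivial
    · trivial
    · exact H.adj_symm h
  loopless := by
    constructor
    rintro (a | a) h
    · exact G.irrefl h
    · exact H.irrefl h

/-- The family `{G + H : G ∈ 𝒢, H ∈ ℋ}` of joins. -/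
def joinFam {V₁ V₂ : Type*} (𝒢 : Set (SimpleGraph V₁)) (ℋ : Set (SimpleGraph V₂)) :
    Set (SimpleGraph (V₁ ⊕ V₂)) :=
  {K | ∃ G ∈ 𝒢, ∃ H ∈ ℋ, K = joinG G H}

/-- The family `𝒢_B(G)`: all graphs `G'` such that, for some permutation `f` of the
vertex set fixing `B` pointwise, `N_{G'}(x) = f(N_G(x))` for every `x ∈ B`. -/
def GBfam {V : Type*} (G : SimpleGraph V) (B : Set V) : Set (SimpleGraph V) :=
  {G' | ∃ f : Equiv.Perm V, (∀ x ∈ B, f x = x) ∧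
    ∀ x ∈ B, G'.neighborSet x = f '' (G.neighborSet x)}

/-!
Lower bound: two vertices of the same copy `H_i` have the same neighbours outside `H_i`, so
a simultaneous adjacency generator of `𝒢 ⊙ ℋ` meets every `H_i` in a simultaneous adjacency
generator of `ℋ`.

Upper bound: fix `v₀ ∈ V` and a simultaneous adjacency basis `B` of `ℋ`, and take every vertex
of `G` but `v₀` together with the copy of `B` in every `H_i`. Vertices of distinct copies
`H_i`, `H_j` are told apart by whichever of `i`, `j` is not `v₀`; the vertex `v₀` is told apart
from `H_{v₀}` by a neighbour of `v₀` in `G` (which exists by connectivity), and from `H_j`,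
`j ≠ v₀`, by a vertex of `B` in `H_{v₀}` (`B ≠ ∅` because `V'` is non-trivial).
-/

section SimultaneousAdjacencyDimension

variable {V : Type*}

lemma isSimAdjGen_univ (ℋ : Set (SimpleGraph V)) : IsSimAdjGen ℋ Set.univ :=
  fun _ _ x _ hx _ _ => absurd (Set.mem_univ x) hx

lemma exists_isSimAdjGen_ncard_eq_sdA (ℋ : Set (SimpleGraph V)) :
    ∃ B : Set V, IsSimAdjGen ℋ B ∧ B.ncard = SdA ℋ := by
  have hne : {n | ∃ S : Set V, S.ncard = n ∧ IsSimAdjGen ℋ S}.Nonempty :=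
    ⟨_, Set.univ, rfl, isSimAdjGen_univ ℋ⟩
  obtain ⟨B, hB, hBgen⟩ := Nat.sInf_mem hne
  exact ⟨B, hBgen, hB⟩

lemma sdA_le_ncard {ℋ : Set (SimpleGraph V)} {S : Set V} (hS : IsSimAdjGen ℋ S) :
    SdA ℋ ≤ S.ncard :=
  Nat.sInf_le ⟨S, rfl, hS⟩

lemma IsAdjGen.nonempty [Nontrivial V] {H : SimpleGraph V} {S : Set V} (hS : IsAdjGen H S) :
    S.Nonempty := by
  obtain ⟨x, y, hxy⟩ := exists_pair_ne V
  by_cases hx : x ∈ S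
  · exact ⟨x, hx⟩
  by_cases hy : y ∈ S
  · exact ⟨y, hy⟩
  obtain ⟨s, hs, -⟩ := hS x y hx hy hxy
  exact ⟨s, hs⟩

end SimultaneousAdjacencyDimension

namespace corona

variable {V V' : Type*} {G : SimpleGraph V} {H : SimpleGraph V'}

@[simp] lemma adj_inl_inr {i : V} {p : V × V'} : (corona G H).Adj (.inl i) (.inr p) ↔ i = p.1 :=
  Iff.rfl

@[simp] lemma adj_inr_inr {p q : V × V'} :
    (corona G H).Adj (.inr p) (.inr q) ↔ p.1 = q.1 ∧ H.Adj p.2 q.2 :=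
  Iff.rfl

lemma isAdjGen_fiber {W : Set (V ⊕ V × V')} (hW : IsAdjGen (corona G H) W) (i : V) :
    IsAdjGen H {w | .inr (i, w) ∈ W} := by
  intro w w' hw hw' hne
  obtain ⟨s | ⟨j, b⟩, hs, hxor⟩ :=
    hW (.inr (i, w)) (.inr (i, w')) hw hw' (by simpa using hne)
  all_goals change Xor _ _ at hxor
  · simp at hxor
  · rcases eq_or_ne j i with rfl | hji
    · simp only [adj_inr_inr, true_and] at hxor
      exact ⟨b, hs, hxor⟩
    · simp [hji] at hxor

end corona

lemma sum_ncard_inr_fiber_le {V V' : Type*} [Fintype V] [Finite V'] (W : Set (V ⊕ V × V')) :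
    ∑ i, {w | Sum.inr (i, w) ∈ W}.ncard ≤ W.ncard := by
  let F : V → Set V' := fun i => {w | Sum.inr (i, w) ∈ W}
  let E : V → Set (V ⊕ V × V') := fun i => Sum.inr '' ({i} ×ˢ F i)
  have hdisj : Pairwise fun i j => Disjoint (E i) (E j) := by
    intro i j hij
    simp [E, Set.disjoint_left, hij.symm]
  calc ∑ i, (F i).ncard = (⋃ i, E i).ncard := by
        rw [Set.ncard_iUnion_of_finite (fun _ => Set.toFinite _) hdisj, finsum_eq_sum_of_fintype]
        simp [E, Set.ncard_image_of_injective _ Sum.inr_injective, Set.ncard_prod]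
    _ ≤ W.ncard := Set.ncard_le_ncard <| Set.iUnion_subset fun i => by
          rintro _ ⟨⟨j, w⟩, ⟨rfl, hw⟩, rfl⟩
          exact hw

section CoronaAdjGen

variable {V V' : Type*}

def coronaAdjGen (v₀ : V) (B : Set V') : Set (V ⊕ V × V') :=
  Sum.inl '' {v₀}ᶜ ∪ Sum.inr '' (Set.univ ×ˢ B)

@[simp] lemma inl_mem_coronaAdjGen {v₀ i : V} {B : Set V'} :
    Sum.inl i ∈ coronaAdjGen v₀ B ↔ i ≠ v₀ := by
  simp [coronaAdjGen]

@[simp] lemma inr_mem_coronaAdjGen {v₀ : V} {B : Set V'} {p : V × V'} :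
    Sum.inr p ∈ coronaAdjGen v₀ B ↔ p.2 ∈ B := by
  simp [coronaAdjGen]

lemma ncard_coronaAdjGen [Fintype V] [Finite V'] (v₀ : V) (B : Set V') :
    (coronaAdjGen v₀ B).ncard = Fintype.card V - 1 + Fintype.card V * B.ncard := by
  rw [coronaAdjGen, Set.ncard_union_eq (by simp [Set.disjoint_left]),
    Set.ncard_image_of_injective _ Sum.inl_injective,
    Set.ncard_image_of_injective _ Sum.inr_injective, Set.ncard_prod, Set.ncard_compl,
    Set.ncard_singleton, Set.ncard_univ, Nat.card_eq_fintype_card]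

lemma isAdjGen_coronaAdjGen {G : SimpleGraph V} {H : SimpleGraph V'} {v₀ u : V} {B : Set V'}
    {b₀ : V'} (hu : G.Adj v₀ u) (hB : IsAdjGen H B) (hb₀ : b₀ ∈ B) :
    IsAdjGen (corona G H) (coronaAdjGen v₀ B) := by
  have hv₀ : ∀ p : V × V', p.2 ∉ B → ∃ s ∈ coronaAdjGen v₀ B,
      Xor ((corona G H).Adj s (.inl v₀)) ((corona G H).Adj s (.inr p)) := by
    rintro ⟨j, w⟩ -
    rcases eq_or_ne j v₀ with rfl | hj
    · exact ⟨.inl u, by simpa using hu.ne.symm, .inl ⟨hu.symm, by simpa using hu.ne.symm⟩⟩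
    · exact ⟨.inr (v₀, b₀), by simpa using hb₀, .inl ⟨rfl, fun h => hj h.1.symm⟩⟩
  rintro (i | ⟨i, w⟩) (j | ⟨j, w'⟩) hx hy hne
  · simp only [inl_mem_coronaAdjGen, not_not] at hx hy
    exact absurd (congrArg Sum.inl (hx.trans hy.symm)) hne
  · simp only [inl_mem_coronaAdjGen, not_not] at hx
    subst hx
    exact hv₀ _ (by simpa using hy)
  · simp only [inl_mem_coronaAdjGen, not_not] at hy
    subst hy
    obtain ⟨s, hs, hxor⟩ := hv₀ (i, w) (by simpa using hx)
    exact ⟨s, hs, cast (_root_.xor_comm _ _) hxor⟩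
  · simp only [inr_mem_coronaAdjGen] at hx hy
    rcases eq_or_ne i j with rfl | hij
    · obtain ⟨b, hb, hxor⟩ := hB w w' hx hy (by simpa using hne)
      exact ⟨.inr (i, b), by simpa using hb, by simpa using hxor⟩
    · rcases eq_or_ne i v₀ with rfl | hi
      · exact ⟨.inl j, by simpa using hij.symm, .inr ⟨rfl, fun h => hij h.symm⟩⟩
      · exact ⟨.inl i, by simpa using hi, .inl ⟨rfl, hij⟩⟩

end CoronaAdjGen

lemma le_sdA_coronaFam {V V' : Type*} [Fintype V] [Finite V'] {𝒢 : Set (SimpleGraph V)}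
    (h𝒢 : 𝒢.Nonempty) (ℋ : Set (SimpleGraph V')) :
    Fintype.card V * SdA ℋ ≤ SdA (coronaFam 𝒢 ℋ) := by
  obtain ⟨G, hG⟩ := h𝒢
  obtain ⟨W, hW, hWcard⟩ := exists_isSimAdjGen_ncard_eq_sdA (coronaFam 𝒢 ℋ)
  have hfiber (i : V) : IsSimAdjGen ℋ {w | Sum.inr (i, w) ∈ W} := fun H hH =>
    corona.isAdjGen_fiber (hW _ ⟨G, hG, H, hH, rfl⟩) i
  calc Fintype.card V * SdA ℋ = ∑ _i : V, SdA ℋ := by simp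
    _ ≤ ∑ i, {w | Sum.inr (i, w) ∈ W}.ncard :=
      Finset.sum_le_sum fun i _ => sdA_le_ncard (hfiber i)
    _ ≤ W.ncard := sum_ncard_inr_fiber_le W
    _ = SdA (coronaFam 𝒢 ℋ) := hWcard

lemma sdA_coronaFam_le {V V' : Type*} [Fintype V] [Finite V'] [Nontrivial V] [Nontrivial V']
    {𝒢 : Set (SimpleGraph V)} (h𝒢 : ∀ G ∈ 𝒢, G.Connected) {ℋ : Set (SimpleGraph V')}
    (hℋ : ℋ.Nonempty) :
    SdA (coronaFam 𝒢 ℋ) ≤ Fintype.card V * SdA ℋ + Fintype.card V - 1 := by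
  obtain ⟨B, hB, hBcard⟩ := exists_isSimAdjGen_ncard_eq_sdA ℋ
  obtain ⟨b₀, hb₀⟩ := (hB _ hℋ.some_mem).nonempty
  obtain ⟨v₀, -⟩ := exists_pair_ne V
  have hgen : IsSimAdjGen (coronaFam 𝒢 ℋ) (coronaAdjGen v₀ B) := by
    rintro _ ⟨G, hG, H, hH, rfl⟩
    obtain ⟨u, hu⟩ := (h𝒢 G hG).preconnected.exists_adj_of_nontrivial v₀
    exact isAdjGen_coronaAdjGen hu (hB H hH) hb₀
  have hV : 0 < Fintype.card V := Fintype.card_pos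
  calc SdA (coronaFam 𝒢 ℋ) ≤ (coronaAdjGen v₀ B).ncard := sdA_le_ncard hgen
    _ = Fintype.card V * SdA ℋ + Fintype.card V - 1 := by
      rw [ncard_coronaAdjGen, hBcard]
      omega

theorem statement_4 {V V' : Type*} [Fintype V] [Fintype V'] [Nontrivial V] [Nontrivial V']
    (𝒢 : Set (SimpleGraph V)) (h𝒢ne : 𝒢.Nonempty) (h𝒢 : ∀ G ∈ 𝒢, G.Connected)
    (ℋ : Set (SimpleGraph V')) (hℋne : ℋ.Nonempty) :
    Fintype.card V * SdA ℋ ≤ SdA (coronaFam 𝒢 ℋ) ∧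
      SdA (coronaFam 𝒢 ℋ) ≤ Fintype.card V * SdA ℋ + Fintype.card V - 1 :=
  ⟨le_sdA_coronaFam h𝒢ne ℋ, sdA_coronaFam_le h𝒢 hℋne⟩
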